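/- arXiv:1905.00068 — 2 statements merged into one kernel-verified Lean document; each statement's English description precedes it below -/
import Mathlib

section
/- Let E be a finite-dimensional real inner product space and let u, h : E → ℝ be smooth. Then for all x ∈ E the drifted Bochner identity holds: (1/2)·Δ_h(‖∇u‖²)(x) = ‖Hess u(x)‖² + ⟨∇u(x), ∇(Δ_h u)(x)⟩ + Hess h(x)(∇u(x), ∇u(x)), where ‖Hess u(x)‖ is the Hilbert–Schmidt norm of the second derivative of u at x. -/
open scoped BigOperators
open Module

variable {E : Type*} [NormedAddCommGroup E] [InnerProductSpace ℝ E] [FiniteDimensional ℝ E]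

/-- The Laplacian of `f : E → ℝ`: the trace of the second derivative, computed as the sum
of the diagonal entries of the second derivative in an orthonormal basis. -/
noncomputable def laplacian (f : E → ℝ) (x : E) : ℝ :=
  ∑ i, iteratedFDeriv ℝ 2 f x ![stdOrthonormalBasis ℝ E i, stdOrthonormalBasis ℝ E i]

/-- The drifting (Bakry–Émery) Laplacian `Δ_h f = Δ f − ⟨∇h, ∇f⟩`. -/
noncomputable def driftLaplacian (h f : E → ℝ) (x : E) : ℝ :=
  laplacian f x - inner ℝ (gradient h x) (gradient f x)

/-- The Hessian of `f` at `x` as a bilinear form. -/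
noncomputable def hess (f : E → ℝ) (x : E) (v w : E) : ℝ :=
  iteratedFDeriv ℝ 2 f x ![v, w]


open scoped ContDiff

noncomputable def pd (i : Fin (finrank ℝ E)) (f : E → ℝ) : E → ℝ :=
  fun x => fderiv ℝ f x (stdOrthonormalBasis ℝ E i)

lemma pd_contDiff {f : E → ℝ} (hf : ContDiff ℝ ∞ f) (i : Fin (finrank ℝ E)) :
    ContDiff ℝ ∞ (pd i f) :=
  (hf.fderiv_right (by simp)).clm_apply contDiff_const

lemma pd_diff {f : E → ℝ} (hf : ContDiff ℝ ∞ f) (i : Fin (finrank ℝ E)) (x : E) :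
    DifferentiableAt ℝ (pd i f) x :=
  ((pd_contDiff hf i).differentiable (by decide)).differentiableAt

lemma inner_grad (f : E → ℝ) (x v : E) : (inner ℝ (gradient f x) v : ℝ) = fderiv ℝ f x v :=
  InnerProductSpace.toDual_symm_apply

lemma pd_pd_eq {f : E → ℝ} (hf : ContDiff ℝ ∞ f) (i j : Fin (finrank ℝ E)) (x : E) :
    pd i (pd j f) x = fderiv ℝ (fderiv ℝ f) x (stdOrthonormalBasis ℝ E i)
      (stdOrthonormalBasis ℝ E j) := by
  have hd : DifferentiableAt ℝ (fderiv ℝ f) x :=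
    ((hf.fderiv_right (m := ∞) (by simp)).differentiable (by decide)).differentiableAt
  calc pd i (pd j f) x
      = (fderiv ℝ (fun y => (fderiv ℝ f y) (stdOrthonormalBasis ℝ E j)) x)
          (stdOrthonormalBasis ℝ E i) := rfl
    _ = (((fderiv ℝ f x).comp (fderiv ℝ (fun _ : E => stdOrthonormalBasis ℝ E j) x)
          + (fderiv ℝ (fderiv ℝ f) x).flip (stdOrthonormalBasis ℝ E j)))
          (stdOrthonormalBasis ℝ E i) := by
        rw [fderiv_clm_apply hd (differentiableAt_const _)]
    _ = _ := by simp

lemma schwarz {f : E → ℝ} (hf : ContDiff ℝ ∞ f) (i j : Fin (finrank ℝ E)) (x : E) :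
    pd i (pd j f) x = pd j (pd i f) x := by
  rw [pd_pd_eq hf, pd_pd_eq hf]
  exact (hf.contDiffAt.isSymmSndFDerivAt (by rw [minSmoothness_of_isRCLikeNormedField]; exact WithTop.coe_le_coe.mpr le_top)) _ _

lemma hess_pd {f : E → ℝ} (hf : ContDiff ℝ ∞ f) (i j : Fin (finrank ℝ E)) (x : E) :
    hess f x (stdOrthonormalBasis ℝ E i) (stdOrthonormalBasis ℝ E j) = pd i (pd j f) x := by
  rw [hess, iteratedFDeriv_two_apply, pd_pd_eq hf]
  simp

lemma laplacian_pd {f : E → ℝ} (hf : ContDiff ℝ ∞ f) (x : E) :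
    laplacian f x = ∑ i, pd i (pd i f) x := by
  unfold laplacian
  exact Finset.sum_congr rfl fun i _ => (hess_pd hf i i x).symm ▸ rfl

lemma gradient_repr (f : E → ℝ) (x : E) :
    gradient f x = ∑ i, pd i f x • stdOrthonormalBasis ℝ E i := by
  conv_lhs => rw [← (stdOrthonormalBasis ℝ E).sum_repr' (gradient f x)]
  refine Finset.sum_congr rfl fun i _ => ?_
  rw [real_inner_comm, inner_grad]
  rfl

lemma inner_grad_grad (f g : E → ℝ) (x : E) :
    (inner ℝ (gradient f x) (gradient g x) : ℝ) = ∑ i, pd i f x * pd i g x := by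
  conv_lhs => rw [gradient_repr g x]
  rw [inner_sum]
  refine Finset.sum_congr rfl fun i _ => ?_
  rw [real_inner_smul_right, mul_comm]
  congr 1
  rw [inner_grad]
  rfl

lemma pd_fun_sum {ι : Type*} (s : Finset ι) (F : ι → E → ℝ) {x : E}
    (hF : ∀ k ∈ s, DifferentiableAt ℝ (F k) x) (i : Fin (finrank ℝ E)) :
    pd i (fun y => ∑ k ∈ s, F k y) x = ∑ k ∈ s, pd i (F k) x := by
  have := fderiv_fun_sum (𝕜 := ℝ) (x := x) hF
  simp only [pd, this, ContinuousLinearMap.sum_apply]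

lemma pd_fun_mul {f g : E → ℝ} {x : E} (hf : DifferentiableAt ℝ f x)
    (hg : DifferentiableAt ℝ g x) (i : Fin (finrank ℝ E)) :
    pd i (fun y => f y * g y) x = pd i f x * g x + f x * pd i g x := by
  have := fderiv_fun_mul hf hg
  simp only [pd, this, ContinuousLinearMap.add_apply, ContinuousLinearMap.smul_apply,
    smul_eq_mul]
  ring

lemma pd_fun_sub {f g : E → ℝ} {x : E} (hf : DifferentiableAt ℝ f x)
    (hg : DifferentiableAt ℝ g x) (i : Fin (finrank ℝ E)) :
    pd i (fun y => f y - g y) x = pd i f x - pd i g x := by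
  have := fderiv_fun_sub hf hg
  simp only [pd, this, ContinuousLinearMap.sub_apply]

lemma hess_bilin {f : E → ℝ} (hf : ContDiff ℝ ∞ f) (x : E) (a : Fin (finrank ℝ E) → ℝ) :
    hess f x (∑ i, a i • stdOrthonormalBasis ℝ E i) (∑ j, a j • stdOrthonormalBasis ℝ E j)
      = ∑ i, ∑ j, a i * a j * pd i (pd j f) x := by
  rw [hess, iteratedFDeriv_two_apply]
  simp only [Matrix.cons_val_zero, Matrix.cons_val_one, Matrix.head_cons]
  rw [show (∑ i, ∑ j, a i * a j * pd i (pd j f) x)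
      = ∑ j, ∑ i, a i * a j * pd i (pd j f) x from Finset.sum_comm]
  rw [map_sum]
  refine Finset.sum_congr rfl fun j _ => ?_
  rw [map_smul, smul_eq_mul, map_sum, ContinuousLinearMap.sum_apply, Finset.mul_sum]
  refine Finset.sum_congr rfl fun i _ => ?_
  rw [map_smul, ContinuousLinearMap.smul_apply, smul_eq_mul, pd_pd_eq hf]
  ring

lemma pd_fun_add {f g : E → ℝ} {x : E} (hf : DifferentiableAt ℝ f x)
    (hg : DifferentiableAt ℝ g x) (i : Fin (finrank ℝ E)) :
    pd i (fun y => f y + g y) x = pd i f x + pd i g x := by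
  have := fderiv_fun_add hf hg
  simp only [pd, this, ContinuousLinearMap.add_apply]

lemma final_algebra {n : ℕ} (a c : Fin n → ℝ) (P H D S : Fin n → Fin n → ℝ)
    (hP : ∀ i k, P i k = P k i) (hDS : ∀ i k, D i k = S k i) :
    (1/2 : ℝ) * ((∑ i, ∑ k, (D i k * a k + P i k * P i k + (P i k * P i k + a k * D i k)))
        - ∑ i, c i * ∑ k, (P i k * a k + a k * P i k))
      = (∑ i, ∑ j, P i j ^ 2)
        + (∑ k, a k * ((∑ i, S k i) - ∑ i, (H k i * a i + c i * P k i)))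
        + ∑ i, ∑ j, a i * a j * H i j := by
  have key : ∀ x y, P x y ^ 2 + a y * S y x - c x * (P x y * a y)
      = P y x ^ 2 + (a y * S y x - a y * (H y x * a x + c x * P y x)) + a y * a x * H y x := by
    intro x y
    linear_combination (P x y + P y x - c x * a y) * (hP x y)
  calc (1/2 : ℝ) * ((∑ i, ∑ k, (D i k * a k + P i k * P i k + (P i k * P i k + a k * D i k)))
        - ∑ i, c i * ∑ k, (P i k * a k + a k * P i k))
      = ∑ i, ∑ k, (P i k ^ 2 + a k * S k i - c i * (P i k * a k)) := by
        simp only [Finset.mul_sum, ← Finset.sum_sub_distrib]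
        refine Finset.sum_congr rfl fun i _ => Finset.sum_congr rfl fun k _ => ?_
        rw [hDS i k]; ring
    _ = ∑ k, ∑ i, (P i k ^ 2 + (a i * S i k - a i * (H i k * a k + c k * P i k))
          + a i * a k * H i k) :=
        Finset.sum_congr rfl fun i _ => Finset.sum_congr rfl fun k _ => key i k
    _ = ∑ i, ∑ k, (P i k ^ 2 + (a i * S i k - a i * (H i k * a k + c k * P i k))
          + a i * a k * H i k) := Finset.sum_comm
    _ = (∑ i, ∑ j, P i j ^ 2)
        + (∑ k, a k * ((∑ i, S k i) - ∑ i, (H k i * a i + c i * P k i)))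
        + ∑ i, ∑ j, a i * a j * H i j := by
        simp only [mul_sub, Finset.mul_sum, ← Finset.sum_sub_distrib, ← Finset.sum_add_distrib]

theorem stmt_3 (u h : E → ℝ) (hu : ContDiff ℝ (⊤ : ℕ∞) u) (hh : ContDiff ℝ (⊤ : ℕ∞) h) :
    ∀ x, (1 / 2 : ℝ) * driftLaplacian h (fun y => ‖gradient u y‖ ^ 2) x
      = (∑ i, ∑ j, hess u x (stdOrthonormalBasis ℝ E i) (stdOrthonormalBasis ℝ E j) ^ 2)
        + (inner ℝ (gradient u x) (gradient (driftLaplacian h u) x) : ℝ)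
        + hess h x (gradient u x) (gradient u x) := by
  intro x
  have hu' : ContDiff ℝ ∞ u := hu.of_le (by simp)
  have hh' : ContDiff ℝ ∞ h := hh.of_le (by simp)
  have gEq : (fun y : E => ‖gradient u y‖ ^ 2) = (fun y => ∑ k, pd k u y * pd k u y) := by
    funext y
    rw [← real_inner_self_eq_norm_sq, inner_grad_grad]
  have hG : ContDiff ℝ ∞ (fun y : E => ∑ k, pd k u y * pd k u y) :=
    ContDiff.sum fun k _ => (pd_contDiff hu' k).mul (pd_contDiff hu' k)
  have DEq : driftLaplacian h u
      = (fun y => (∑ i, pd i (pd i u) y) - ∑ i, pd i h y * pd i u y) := by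
    funext y
    rw [driftLaplacian, laplacian_pd hu', inner_grad_grad]
  have pdG : ∀ i, pd i (fun y : E => ∑ k, pd k u y * pd k u y)
      = fun y => ∑ k, (pd i (pd k u) y * pd k u y + pd k u y * pd i (pd k u) y) := by
    intro i; funext y
    rw [pd_fun_sum _ _ (fun k _ => ((pd_diff hu' k y).fun_mul (pd_diff hu' k y)))]
    exact Finset.sum_congr rfl fun k _ => pd_fun_mul (pd_diff hu' k y) (pd_diff hu' k y) i
  have pdG2 : ∀ i, pd i
      (fun y => ∑ k, (pd i (pd k u) y * pd k u y + pd k u y * pd i (pd k u) y)) x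
      = ∑ k, ((pd i (pd i (pd k u)) x * pd k u x + pd i (pd k u) x * pd i (pd k u) x)
          + (pd i (pd k u) x * pd i (pd k u) x + pd k u x * pd i (pd i (pd k u)) x)) := by
    intro i
    rw [pd_fun_sum _ _ (fun k _ =>
      ((pd_diff (pd_contDiff hu' k) i x).fun_mul (pd_diff hu' k x)).fun_add
        ((pd_diff hu' k x).fun_mul (pd_diff (pd_contDiff hu' k) i x)))]
    refine Finset.sum_congr rfl fun k _ => ?_
    rw [pd_fun_add ((pd_diff (pd_contDiff hu' k) i x).fun_mul (pd_diff hu' k x))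
        ((pd_diff hu' k x).fun_mul (pd_diff (pd_contDiff hu' k) i x)),
      pd_fun_mul (pd_diff (pd_contDiff hu' k) i x) (pd_diff hu' k x),
      pd_fun_mul (pd_diff hu' k x) (pd_diff (pd_contDiff hu' k) i x)]
  have pdD : ∀ k, pd k (fun y => (∑ i, pd i (pd i u) y) - ∑ i, pd i h y * pd i u y) x
      = (∑ i, pd k (pd i (pd i u)) x)
        - ∑ i, (pd k (pd i h) x * pd i u x + pd i h x * pd k (pd i u) x) := by
    intro k
    rw [pd_fun_sub
      (DifferentiableAt.fun_sum fun i _ => pd_diff (pd_contDiff hu' i) i x)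
      (DifferentiableAt.fun_sum fun i _ => (pd_diff hh' i x).fun_mul (pd_diff hu' i x)),
      pd_fun_sum _ _ (fun i _ => pd_diff (pd_contDiff hu' i) i x),
      pd_fun_sum _ _ (fun i _ => (pd_diff hh' i x).fun_mul (pd_diff hu' i x))]
    congr 1
    exact Finset.sum_congr rfl fun i _ => pd_fun_mul (pd_diff hh' i x) (pd_diff hu' i x) k
  rw [gEq, DEq]
  rw [inner_grad_grad u _ x]
  rw [gradient_repr u x, hess_bilin hh']
  simp only [driftLaplacian, laplacian_pd hG, inner_grad_grad, hess_pd hu']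
  simp only [pdG, pdG2, pdD]
  have hP : ∀ i k, pd i (pd k u) x = pd k (pd i u) x := fun i k => schwarz hu' i k x
  have hDS : ∀ i k, pd i (pd i (pd k u)) x = pd k (pd i (pd i u)) x := by
    intro i k
    have h1 : pd i (pd k u) = pd k (pd i u) := funext fun y => schwarz hu' i k y
    calc pd i (pd i (pd k u)) x = pd i (pd k (pd i u)) x := by rw [h1]
      _ = pd k (pd i (pd i u)) x := schwarz (pd_contDiff hu' i) i k x
  exact final_algebra (fun k => pd k u x) (fun i => pd i h x)
    (fun i k => pd i (pd k u) x) (fun i k => pd i (pd k h) x)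
    (fun i k => pd i (pd i (pd k u)) x) (fun k i => pd k (pd i (pd i u)) x) hP hDS
end

section
/- Let E be a finite-dimensional real inner product space of dimension n ≥ 1, let k ≥ 1 be a natural number, let m > 0 be real, and let θ < 0 be a real constant. There do not exist smooth functions f, h : E → ℝ with f > 0 everywhere such that: (i) Hess h(x)(w,w) − (1/m)⟨∇h(x), w⟩² ≥ 0 for all x and all w ∈ E, and (ii) f(x)·Δf(x) + (k−1)·‖∇f(x)‖² − f(x)·⟨∇h(x), ∇f(x)⟩ = θ for all x ∈ E. -/
open scoped BigOperators
open Module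

variable {E : Type*} [NormedAddCommGroup E] [InnerProductSpace ℝ E] [FiniteDimensional ℝ E]

section Lemmas

set_option linter.unusedSectionVars false

lemma line1 {u : E → ℝ} (hu : ContDiff ℝ (⊤ : ℕ∞) u) (x v : E) (t : ℝ) :
    HasDerivAt (fun s : ℝ => u (x + s • v)) (fderiv ℝ u (x + t • v) v) t := by
  have h1 : HasDerivAt (fun s : ℝ => x + s • v) v t := by
    simpa using ((hasDerivAt_id t).smul_const v).const_add x
  exact ((hu.differentiable (by simp) _).hasFDerivAt).comp_hasDerivAt t h1

lemma line2 {u : E → ℝ} (hu : ContDiff ℝ (⊤ : ℕ∞) u) (x v : E) (t : ℝ) :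
    HasDerivAt (fun s : ℝ => fderiv ℝ u (x + s • v) v) (hess u (x + t • v) v v) t := by
  have h1 : HasDerivAt (fun s : ℝ => x + s • v) v t := by
    simpa using ((hasDerivAt_id t).smul_const v).const_add x
  have hd : ContDiff ℝ (⊤ : ℕ∞) (fderiv ℝ u) := hu.fderiv_right (by simp)
  have h2 : HasDerivAt (fun s : ℝ => fderiv ℝ u (x + s • v))
      (fderiv ℝ (fderiv ℝ u) (x + t • v) v) t :=
    ((hd.differentiable (by simp) _).hasFDerivAt).comp_hasDerivAt t h1
  have h3 := h2.clm_apply (hasDerivAt_const t v)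
  simp only [map_zero, add_zero] at h3
  have he : hess u (x + t • v) v v = fderiv ℝ (fderiv ℝ u) (x + t • v) v v := by
    simp [hess, iteratedFDeriv_two_apply]
  rw [he]
  convert h3 using 1

lemma grad_inner {u : E → ℝ} (x v : E) :
    (inner ℝ (gradient u x) v : ℝ) = fderiv ℝ u x v := InnerProductSpace.toDual_symm_apply

lemma hess_line_eq {u : E → ℝ} (hu : ContDiff ℝ (⊤ : ℕ∞) u) (x v : E) (G' : ℝ → ℝ) (c : ℝ)
    (hG : ∀ t, HasDerivAt (fun s : ℝ => u (x + s • v)) (G' t) t)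
    (hG' : HasDerivAt G' c 0) : hess u x v v = c := by
  have e1 : (fun t : ℝ => fderiv ℝ u (x + t • v) v) = G' :=
    funext fun t => (line1 hu x v t).unique (hG t)
  have h2 := line2 hu x v 0
  rw [e1] at h2
  have h3 := h2.unique hG'
  rw [zero_smul, add_zero] at h3
  exact h3

lemma parseval (v : E) :
    ∑ i, (inner ℝ v (stdOrthonormalBasis ℝ E i) : ℝ)^2 = ‖v‖^2 := by
  have h := (stdOrthonormalBasis ℝ E).sum_inner_mul_inner v v
  rw [real_inner_self_eq_norm_sq] at h
  rw [← h]
  refine Finset.sum_congr rfl fun i _ => ?_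
  rw [sq, real_inner_comm (stdOrthonormalBasis ℝ E i) v]

/-- Second derivative test at a local max. -/
lemma sdt {g g' : ℝ → ℝ} {c δ : ℝ} (hδ : 0 < δ)
    (hg : ∀ t, |t| < δ → HasDerivAt g (g' t) t)
    (hg' : HasDerivAt g' c 0)
    (hmax : IsLocalMax g 0) : c ≤ 0 := by
  by_contra hc
  push_neg at hc
  have hg'0 : g' 0 = 0 := hmax.hasDerivAt_eq_zero (hg 0 (by simpa using hδ))
  have hslope : Filter.Tendsto (slope g' 0) (nhdsWithin 0 {(0:ℝ)}ᶜ) (nhds c) :=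
    hasDerivAt_iff_tendsto_slope.1 hg'
  have hev : ∀ᶠ t in nhdsWithin 0 {(0:ℝ)}ᶜ, 0 < slope g' 0 t :=
    hslope.eventually (eventually_gt_nhds hc)
  have hev' : ∀ᶠ t in nhdsWithin (0:ℝ) (Set.Ioi 0), 0 < slope g' 0 t :=
    hev.filter_mono (nhdsWithin_mono 0 (fun x hx => ne_of_gt hx))
  obtain ⟨t0, ht0, hIoo⟩ := mem_nhdsGT_iff_exists_Ioo_subset.1 hev'
  obtain ⟨ε, hε, hmaxball⟩ := Metric.eventually_nhds_iff.1 hmax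
  have ht0' : (0:ℝ) < t0 := ht0
  have hmpos : 0 < min (min t0 ε) δ := lt_min (lt_min ht0' hε) hδ
  set t := min (min t0 ε) δ / 2 with ht_def
  have htpos : 0 < t := by positivity
  have htm : t < min (min t0 ε) δ := by rw [ht_def]; linarith
  have htδ : t < δ := htm.trans_le (min_le_right _ _)
  have httt0 : t < t0 := htm.trans_le ((min_le_left _ _).trans (min_le_left _ _))
  have htε : t < ε := htm.trans_le ((min_le_left _ _).trans (min_le_right _ _))
  have hcont : ContinuousOn g (Set.Icc 0 t) := by
    intro s hs
    have : |s| < δ := by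
      rw [abs_lt]; constructor
      · linarith [hs.1]
      · linarith [hs.2]
    exact ((hg s this).continuousAt).continuousWithinAt
  have hderiv : ∀ s ∈ Set.Ioo 0 t, HasDerivAt g (g' s) s := by
    intro s hs
    have : |s| < δ := by
      rw [abs_lt]; constructor
      · linarith [hs.1]
      · linarith [hs.2]
    exact hg s this
  obtain ⟨cp, hcp, hcpeq⟩ := exists_hasDerivAt_eq_slope g g' htpos hcont hderiv
  have hcpIoo : cp ∈ Set.Ioo 0 t0 := ⟨hcp.1, hcp.2.trans httt0⟩
  have hsl : 0 < slope g' 0 cp := hIoo hcpIoo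
  rw [slope_def_field] at hsl
  rw [hg'0, sub_zero, sub_zero] at hsl
  have hcpne : cp ≠ 0 := ne_of_gt hcp.1
  have hgcp : 0 < g' cp := by
    have := mul_pos hsl hcp.1
    rwa [div_mul_cancel₀ _ hcpne] at this
  have hgt : g 0 < g t := by
    rw [hcpeq, sub_zero] at hgcp
    have htne : t ≠ 0 := ne_of_gt htpos
    have := mul_pos hgcp htpos
    rw [div_mul_cancel₀ _ htne] at this
    linarith
  have : g t ≤ g 0 := hmaxball (by simp [Real.dist_eq, abs_of_pos htpos]; exact htε)
  linarith

/-- Positive function on ℝ with antitone derivative has vanishing derivative at 0. -/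
lemma pos_concave_deriv_zero {g g' : ℝ → ℝ}
    (hg : ∀ t, HasDerivAt g (g' t) t)
    (hanti : Antitone g') (hpos : ∀ t, 0 < g t) : g' 0 = 0 := by
  rcases lt_trichotomy (g' 0) 0 with hneg | h0 | hposd
  · exfalso
    have hne : -(g' 0) ≠ 0 := by linarith
    set T := (g 0 + 1) / (-(g' 0)) with hT
    have hTpos : 0 < T := div_pos (by linarith [hpos 0]) (by linarith)
    have hkey : g' 0 * T = -(g 0 + 1) := by
      rw [hT, mul_div_assoc', div_eq_iff hne]; ring
    obtain ⟨cp, hcp, hcpeq⟩ := exists_hasDerivAt_eq_slope g g' hTpos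
      (fun s _ => (hg s).continuousAt.continuousWithinAt) (fun s _ => hg s)
    have h1 : g' cp ≤ g' 0 := hanti hcp.1.le
    have h2 : (g T - g 0) / (T - 0) ≤ g' 0 := by rw [← hcpeq]; exact h1
    have h3 : g T - g 0 ≤ g' 0 * (T - 0) := by
      have := (div_le_iff₀ (by linarith : (0:ℝ) < T - 0)).1 h2
      linarith [this]
    have h4 : g' 0 * (T - 0) = g' 0 * T := by ring
    rw [h4, hkey] at h3
    linarith [hpos T, hpos 0]
  · exact h0
  · exfalso
    have hne : g' 0 ≠ 0 := by linarith
    set T := -((g 0 + 1) / g' 0) with hT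
    have hTneg : T < 0 := by
      have h5 : 0 < (g 0 + 1) / g' 0 := div_pos (by linarith [hpos 0]) hposd
      rw [hT]; linarith
    have hkey : g' 0 * T = -(g 0 + 1) := by
      rw [hT]; field_simp
    obtain ⟨cp, hcp, hcpeq⟩ := exists_hasDerivAt_eq_slope g g' hTneg
      (fun s _ => (hg s).continuousAt.continuousWithinAt) (fun s _ => hg s)
    have h1 : g' 0 ≤ g' cp := hanti hcp.2.le
    have h2 : g' 0 ≤ (g 0 - g T) / (0 - T) := by rw [← hcpeq]; exact h1
    have h3 : g' 0 * (0 - T) ≤ g 0 - g T := (le_div_iff₀ (by linarith : (0:ℝ) < 0 - T)).1 h2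
    have h4 : g' 0 * (0 - T) = -(g' 0 * T) := by ring
    rw [h4, hkey] at h3
    linarith [hpos T, hpos 0]

/-- Step A: the quasi-Einstein condition over a flat base forces `h` to be constant. -/
lemma gradh_zero {h : E → ℝ} {m : ℝ} (hm : 0 < m) (hh : ContDiff ℝ (⊤ : ℕ∞) h)
    (hyp : ∀ x, ∀ w : E, hess h x w w - (1 / m) * (inner ℝ (gradient h x) w : ℝ) ^ 2 ≥ 0) :
    ∀ x, gradient h x = 0 := by
  intro x
  have key : ∀ v : E, fderiv ℝ h x v = 0 := by
    intro v
    set H' : ℝ → ℝ := fun t => fderiv ℝ h (x + t • v) v with hH'def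
    have hH : ∀ t, HasDerivAt (fun s : ℝ => h (x + s • v)) (H' t) t := line1 hh x v
    have hH' : ∀ t, HasDerivAt H' (hess h (x + t • v) v v) t := line2 hh x v
    set g : ℝ → ℝ := fun t => Real.exp ((-(1:ℝ)/m) * h (x + t • v)) with hgdef
    set g' : ℝ → ℝ := fun t => g t * ((-(1:ℝ)/m) * H' t) with hg'def
    have hg : ∀ t, HasDerivAt g (g' t) t := fun t => ((hH t).const_mul ((-(1:ℝ))/m)).exp
    have hg' : ∀ t, HasDerivAt g'
        (g' t * ((-(1:ℝ)/m) * H' t) + g t * ((-(1:ℝ)/m) * hess h (x + t • v) v v)) t :=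
      fun t => (hg t).mul ((hH' t).const_mul ((-(1:ℝ))/m))
    have hgpos : ∀ t, 0 < g t := fun t => Real.exp_pos _
    have hanti : Antitone g' := by
      apply antitone_of_deriv_nonpos (fun t => (hg' t).differentiableAt)
      intro t
      rw [(hg' t).deriv]
      have hq := hyp (x + t • v) v
      rw [grad_inner] at hq
      have hq' : (1/m) * (H' t)^2 ≤ hess h (x + t • v) v v := by
        rw [hH'def]; linarith [hq]
      have hgt := (hgpos t).le
      have hmm : 0 < 1/m := by positivity
      have e1 : g' t * ((-(1:ℝ)/m) * H' t) + g t * ((-(1:ℝ)/m) * hess h (x + t • v) v v)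
          = g t * ((1/m^2) * (H' t)^2 - (1/m) * hess h (x + t • v) v v) := by
        rw [hg'def]; ring
      rw [e1]
      apply mul_nonpos_of_nonneg_of_nonpos hgt
      have : (1/m) * ((1/m) * (H' t)^2) ≤ (1/m) * hess h (x + t • v) v v :=
        mul_le_mul_of_nonneg_left hq' hmm.le
      have e2 : (1/m) * ((1/m) * (H' t)^2) = (1/m^2) * (H' t)^2 := by ring
      linarith [e2 ▸ this]
    have h0 : g' 0 = 0 := pos_concave_deriv_zero hg hanti hgpos
    rw [hg'def] at h0
    have hg0 : g 0 ≠ 0 := (hgpos 0).ne'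
    have hmne : m ≠ 0 := hm.ne'
    have : H' 0 = 0 := by
      rcases mul_eq_zero.1 h0 with h | h
      · exact absurd h hg0
      · rcases mul_eq_zero.1 h with h' | h'
        · exfalso; apply hmne; field_simp at h'; simp at h'
        · exact h'
    rw [hH'def] at this
    simpa using this
  have hz : (inner ℝ (gradient h x) (gradient h x) : ℝ) = 0 := by
    rw [grad_inner]; exact key _
  exact inner_self_eq_zero.1 hz

/-- Step B1: Hessian of `(f²)⁻¹` diagonal entries. -/
lemma hess_p {f : E → ℝ} (hf : ContDiff ℝ (⊤ : ℕ∞) f) (hfpos : ∀ x, 0 < f x) (x v : E) :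
    hess (fun y => ((f y)^2)⁻¹) x v v =
      6 * (fderiv ℝ f x v)^2 * ((f x)^4)⁻¹ - 2 * hess f x v v * ((f x)^3)⁻¹ := by
  have hp : ContDiff ℝ (⊤ : ℕ∞) (fun y => ((f y)^2)⁻¹) :=
    (hf.pow 2).inv fun y => pow_ne_zero 2 (hfpos y).ne'
  set F : ℝ → ℝ := fun t => f (x + t • v) with hFdef
  set F' : ℝ → ℝ := fun t => fderiv ℝ f (x + t • v) v with hF'def
  have hF : ∀ t, HasDerivAt F (F' t) t := line1 hf x v
  have hF' : ∀ t, HasDerivAt F' (hess f (x + t • v) v v) t := line2 hf x v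
  have hFpos : ∀ t, 0 < F t := fun t => hfpos _
  set G' : ℝ → ℝ := fun t => (-2 : ℝ) * (F' t * ((F t)^3)⁻¹) with hG'def
  have hG : ∀ t, HasDerivAt (fun s : ℝ => ((f (x + s • v))^2)⁻¹) (G' t) t := by
    intro t
    have h1 : HasDerivAt (fun s => (F s)^2) ((2:ℕ) * F t ^ 1 * F' t) t := (hF t).pow 2
    have h2 := h1.inv (pow_ne_zero 2 (hFpos t).ne')
    refine h2.congr_deriv ?_
    have hne := (hFpos t).ne'
    rw [hG'def]
    field_simp
    ring
  have hB : ∀ t, HasDerivAt (fun s => ((F s)^3)⁻¹)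
      (-((3:ℕ) * F t ^ 2 * F' t) / ((F t)^3)^2) t :=
    fun t => ((hF t).pow 3).inv (pow_ne_zero 3 (hFpos t).ne')
  have hG' : HasDerivAt G'
      (6 * (F' 0)^2 * ((F 0)^4)⁻¹ - 2 * hess f x v v * ((F 0)^3)⁻¹) 0 := by
    have h1 := ((hF' 0).mul (hB 0)).const_mul (-2 : ℝ)
    rw [zero_smul, add_zero] at h1
    refine h1.congr_deriv ?_
    have hne := (hFpos 0).ne'
    have e0 : F 0 = f x := by rw [hFdef]; simp
    rw [e0] at hne ⊢
    field_simp
    ring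
  have := hess_line_eq hp x v G' _ hG hG'
  rw [this]
  have e0 : F 0 = f x := by rw [hFdef]; simp
  have e1 : F' 0 = fderiv ℝ f x v := by rw [hF'def]; simp
  rw [e0, e1]

/-- Step B2: the Laplacian of `(f²)⁻¹`. -/
lemma lap_p {f : E → ℝ} (hf : ContDiff ℝ (⊤ : ℕ∞) f) (hfpos : ∀ x, 0 < f x) (x : E) :
    laplacian (fun y => ((f y)^2)⁻¹) x =
      6 * ‖gradient f x‖^2 * ((f x)^4)⁻¹ - 2 * laplacian f x * ((f x)^3)⁻¹ := by
  have h1 : laplacian (fun y => ((f y)^2)⁻¹) x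
      = ∑ i, (6 * (fderiv ℝ f x (stdOrthonormalBasis ℝ E i))^2 * ((f x)^4)⁻¹
          - 2 * hess f x (stdOrthonormalBasis ℝ E i) (stdOrthonormalBasis ℝ E i) * ((f x)^3)⁻¹) :=
    Finset.sum_congr rfl fun i _ => hess_p hf hfpos x _
  rw [h1, Finset.sum_sub_distrib]
  congr 1
  · rw [← Finset.sum_mul, ← Finset.mul_sum]
    congr 1
    have : ∀ i, fderiv ℝ f x (stdOrthonormalBasis ℝ E i)
        = (inner ℝ (gradient f x) (stdOrthonormalBasis ℝ E i) : ℝ) := fun i => (grad_inner x _).symm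
    congr 1
    calc ∑ i, (fderiv ℝ f x (stdOrthonormalBasis ℝ E i))^2
        = ∑ i, (inner ℝ (gradient f x) (stdOrthonormalBasis ℝ E i) : ℝ)^2 :=
          Finset.sum_congr rfl fun i _ => by rw [this i]
      _ = ‖gradient f x‖^2 := parseval (gradient f x)
  · rw [← Finset.sum_mul, ← Finset.mul_sum]
    rfl

/-- Barrier comparison at an interior local max point, directionwise. -/
lemma barrier_sdt {p : E → ℝ} (hp : ContDiff ℝ (⊤ : ℕ∞) p) {A R r' : ℝ}
    (hr'pos : 0 < r') (hr'R : r' < R)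
    {x1 : E} (hx1 : ‖x1‖ ≤ r') (e : E) (he : ‖e‖ = 1)
    (hloc : IsLocalMax (fun y => p y - A * ((R^2 - ‖y‖^2)^2)⁻¹) x1) :
    hess p x1 e e ≤ 4*A*((R^2-‖x1‖^2)^3)⁻¹
      + 6*A*(2*(inner ℝ x1 e : ℝ))^2*((R^2-‖x1‖^2)^4)⁻¹ := by
  set δ := R - r' with hδdef
  have hδpos : 0 < δ := by rw [hδdef]; linarith
  set Q : ℝ → ℝ := fun t => ‖x1‖^2 + (2*(inner ℝ x1 e : ℝ))*t + t^2 with hQdef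
  set Q' : ℝ → ℝ := fun t => 2*(inner ℝ x1 e : ℝ) + 2*t with hQ'def
  have hQeq : ∀ t : ℝ, ‖x1 + t • e‖^2 = Q t := by
    intro t
    rw [hQdef, @norm_add_sq_real]
    rw [real_inner_smul_right, norm_smul]
    simp [he]
    ring
  have hQ : ∀ t, HasDerivAt Q (Q' t) t := by
    intro t
    have h1 : HasDerivAt (fun s : ℝ => ‖x1‖^2 + (2*(inner ℝ x1 e : ℝ))*s + s^2)
        (0 + (2*(inner ℝ x1 e : ℝ))*1 + (2:ℕ)*t^1) t :=
      (((hasDerivAt_const t (‖x1‖^2)).add ((hasDerivAt_id t).const_mul _))).add (hasDerivAt_pow 2 t)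
    convert h1 using 1
    rw [hQ'def]; push_cast; ring
  have hQ' : ∀ t, HasDerivAt Q' 2 t := by
    intro t
    have h1 : HasDerivAt (fun s : ℝ => 2*(inner ℝ x1 e : ℝ) + 2*s) (0 + 2*1) t :=
      (hasDerivAt_const t _).add ((hasDerivAt_id t).const_mul 2)
    convert h1 using 1; ring
  have hQbound : ∀ t : ℝ, |t| < δ → 0 < R^2 - Q t := by
    intro t ht
    rw [← hQeq]
    have h1 : ‖x1 + t • e‖ ≤ ‖x1‖ + |t| := by
      calc ‖x1 + t • e‖ ≤ ‖x1‖ + ‖t • e‖ := norm_add_le _ _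
        _ = ‖x1‖ + |t| := by rw [norm_smul, he]; simp
    have h2 : ‖x1 + t • e‖ < R := by
      rw [hδdef] at ht; calc ‖x1 + t • e‖ ≤ ‖x1‖ + |t| := h1
        _ < r' + (R - r') := by have := abs_nonneg t; linarith
        _ = R := by ring
    nlinarith [norm_nonneg (x1 + t • e)]
  set W' : ℝ → ℝ := fun t => 2*A*(Q' t * ((R^2 - Q t)^3)⁻¹) with hW'def
  have hweq : (fun s : ℝ => A * ((R^2 - ‖x1 + s • e‖^2)^2)⁻¹)
      = (fun s : ℝ => A * ((R^2 - Q s)^2)⁻¹) := funext fun s => by rw [hQeq]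
  have hW : ∀ t : ℝ, |t| < δ → HasDerivAt (fun s : ℝ => A * ((R^2 - ‖x1 + s • e‖^2)^2)⁻¹) (W' t) t := by
    intro t ht
    have hpos := hQbound t ht
    have h1 : HasDerivAt (fun s => R^2 - Q s) (-(Q' t)) t := (hQ t).const_sub (R^2)
    have h2 : HasDerivAt (fun s => (R^2 - Q s)^2) ((2:ℕ)*(R^2 - Q t)^1*(-(Q' t))) t := h1.pow 2
    have h3 := h2.inv (pow_ne_zero 2 hpos.ne')
    have h4 := h3.const_mul A
    rw [hweq]
    refine h4.congr_deriv ?_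
    rw [hW'def]
    field_simp
    ring
  have hW'' : HasDerivAt W'
      (2*A*(2 * ((R^2 - Q 0)^3)⁻¹ + Q' 0 * (-((3:ℕ) * (R^2 - Q 0) ^ 2 * (-(Q' 0))) / ((R^2 - Q 0)^3)^2))) 0 := by
    have hpos := hQbound 0 (by simpa using hδpos)
    have h1 : HasDerivAt (fun s => R^2 - Q s) (-(Q' 0)) 0 := (hQ 0).const_sub (R^2)
    have h2 : HasDerivAt (fun s => (R^2 - Q s)^3) ((3:ℕ)*(R^2 - Q 0)^2*(-(Q' 0))) 0 := h1.pow 3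
    have h3 := h2.inv (pow_ne_zero 3 hpos.ne')
    have h4 := ((hQ' 0).mul h3).const_mul (2*A)
    exact h4
  -- the local max along the line through x1 in direction e
  have hlin : IsLocalMax (fun t : ℝ => p (x1 + t • e) - A * ((R^2 - ‖x1 + t • e‖^2)^2)⁻¹) 0 := by
    obtain ⟨ε, hε, hball⟩ := Metric.eventually_nhds_iff.1 hloc
    apply Metric.eventually_nhds_iff.2 ⟨ε, hε, ?_⟩
    intro t ht
    have : dist (x1 + t • e) x1 < ε := by
      rw [dist_eq_norm]
      simp only [add_sub_cancel_left]
      rw [norm_smul, he]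
      simpa [Real.dist_eq] using ht
    have := hball this
    simpa using this
  have hfinal := sdt hδpos
    (g := fun t : ℝ => p (x1 + t • e) - A * ((R^2 - ‖x1 + t • e‖^2)^2)⁻¹)
    (g' := fun t : ℝ => fderiv ℝ p (x1 + t • e) e - W' t)
    (fun t ht => (line1 hp x1 e t).sub (hW t ht))
    (by
      have h1 := (line2 hp x1 e 0).sub hW''
      rw [zero_smul, add_zero] at h1
      exact h1)
    hlin
  have hQ0 : Q 0 = ‖x1‖^2 := by rw [hQdef]; ring
  have hQ'0 : Q' 0 = 2*(inner ℝ x1 e : ℝ) := by rw [hQ'def]; ring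
  have hpos0 : 0 < R^2 - ‖x1‖^2 := by
    have := hQbound 0 (by simpa using hδpos); rwa [hQ0] at this
  have heq : 2*A*(2 * ((R^2 - Q 0)^3)⁻¹ + Q' 0 * (-((3:ℕ) * (R^2 - Q 0) ^ 2 * (-(Q' 0))) / ((R^2 - Q 0)^3)^2))
      = 4*A*((R^2-‖x1‖^2)^3)⁻¹ + 6*A*(2*(inner ℝ x1 e : ℝ))^2*((R^2-‖x1‖^2)^4)⁻¹ := by
    rw [hQ0, hQ'0]
    field_simp
    ring
  linarith [heq ▸ hfinal]

end Lemmas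


set_option maxHeartbeats 1000000 in
theorem stmt_14 (n : ℕ) (hn : finrank ℝ E = n) (hn1 : 1 ≤ n) (k : ℕ) (hk : 1 ≤ k)
    (m θ : ℝ) (hm : 0 < m) (hθ : θ < 0) :
    ¬ ∃ f h : E → ℝ, ContDiff ℝ (⊤ : ℕ∞) f ∧ ContDiff ℝ (⊤ : ℕ∞) h ∧ (∀ x, 0 < f x) ∧
      (∀ x, ∀ w : E, hess h x w w - (1 / m) * (inner ℝ (gradient h x) w : ℝ) ^ 2 ≥ 0) ∧
      (∀ x, f x * laplacian f x + ((k : ℝ) - 1) * ‖gradient f x‖ ^ 2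
        - f x * (inner ℝ (gradient h x) (gradient f x) : ℝ) = θ) := by
  rintro ⟨f, h, hf, hh, hfpos, hQE, hWF⟩
  have hgradh : ∀ x, gradient h x = 0 := gradh_zero hm hh hQE
  have hWF' : ∀ x, f x * laplacian f x + ((k : ℝ) - 1) * ‖gradient f x‖ ^ 2 = θ := by
    intro x
    have h1 := hWF x
    rw [hgradh x, inner_zero_left] at h1
    linarith [h1]
  set c : ℝ := -2*θ with hcdef
  have hcpos : 0 < c := by rw [hcdef]; linarith
  set p : E → ℝ := fun y => ((f y)^2)⁻¹ with hpdef
  have hp : ContDiff ℝ (⊤ : ℕ∞) p := (hf.pow 2).inv fun y => pow_ne_zero 2 (hfpos y).ne'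
  have hppos : ∀ y : E, 0 < p y := fun y => by
    rw [hpdef]; have := hfpos y; positivity
  have hk' : (1:ℝ) ≤ (k:ℝ) := by exact_mod_cast hk
  -- Step B : laplacian p ≥ c p²
  have hlapp : ∀ y : E, c * (p y)^2 ≤ laplacian p y := by
    intro y
    have hfy := hfpos y
    have hL := lap_p hf hfpos y
    have hE := hWF' y
    have hG : (0:ℝ) ≤ ‖gradient f y‖^2 := sq_nonneg _
    have hinv4 : (0:ℝ) < ((f y)^4)⁻¹ := by positivity
    have h3 : ((f y)^3)⁻¹ = f y * ((f y)^4)⁻¹ := by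
      rw [eq_comm]
      field_simp
    have hp2 : (p y)^2 = ((f y)^4)⁻¹ := by
      rw [hpdef]
      simp only [← inv_pow]
      norm_num [← pow_mul]
    have hlapy : laplacian p y = laplacian (fun z => ((f z)^2)⁻¹) y := rfl
    rw [hlapy, hL, hp2, h3]
    have e2 : 2 * laplacian f y * (f y * ((f y)^4)⁻¹)
        = 2*(θ - ((k:ℝ)-1)*‖gradient f y‖^2) * ((f y)^4)⁻¹ := by
      have e3 : f y * laplacian f y = θ - ((k:ℝ)-1)*‖gradient f y‖^2 := by linarith
      calc 2 * laplacian f y * (f y * ((f y)^4)⁻¹)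
          = 2*(f y * laplacian f y)*((f y)^4)⁻¹ := by ring
        _ = _ := by rw [e3]
    rw [e2]
    have e4 : c ≤ 6*‖gradient f y‖^2 - 2*(θ - ((k:ℝ)-1)*‖gradient f y‖^2) := by
      rw [hcdef]; nlinarith
    nlinarith [mul_le_mul_of_nonneg_right e4 hinv4.le]
  -- Main claim : for every R > 0, p 0 ≤ 4(n+6)/(c R²)
  have main : ∀ R : ℝ, 0 < R → p 0 ≤ 4*((n:ℝ)+6) / (c * R^2) := by
    intro R hR
    by_contra hcon
    push_neg at hcon
    set A : ℝ := 4*((n:ℝ)+6)*R^2 / c with hAdef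
    have hApos : 0 < A := by rw [hAdef]; positivity
    have hcA : c * A = 4*((n:ℝ)+6)*R^2 := by
      rw [hAdef]; field_simp
    set w : E → ℝ := fun y => A * ((R^2 - ‖y‖^2)^2)⁻¹ with hwdef
    have hw0 : w 0 = 4*((n:ℝ)+6)/(c*R^2) := by
      rw [hwdef]
      simp only [norm_zero]
      rw [hAdef]
      field_simp
      ring
    have hu0 : 0 < p 0 - w 0 := by rw [hw0]; linarith
    -- maximum of p on the closed ball of radius R
    obtain ⟨xM, hxMmem, hxMmax⟩ := (isCompact_closedBall (0:E) R).exists_isMaxOn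
      ⟨0, by simp [hR.le]⟩ (hp.continuous.continuousOn)
    set M := p xM with hMdef
    have hM0 : 0 < M := hppos xM
    set ε : ℝ := min (R^2/2) (Real.sqrt (A/(M+1))) with hεdef
    have hAM : 0 < A/(M+1) := by positivity
    have hεpos : 0 < ε := lt_min (by positivity) (Real.sqrt_pos.2 hAM)
    have hεR : ε ≤ R^2/2 := min_le_left _ _
    set r' : ℝ := Real.sqrt (R^2 - ε) with hr'def
    have hr'sq : r'^2 = R^2 - ε := Real.sq_sqrt (by nlinarith)
    have hr'pos : 0 < r' := Real.sqrt_pos.2 (by nlinarith)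
    have hr'R : r' < R := by nlinarith
    -- w is large on the annulus r' ≤ ‖y‖ < R
    have hannulus : ∀ y : E, r' ≤ ‖y‖ → ‖y‖ < R → M + 1 ≤ w y := by
      intro y h1 h2
      have hy0 := norm_nonneg y
      have hs1 : 0 < R^2 - ‖y‖^2 := by nlinarith
      have hs2 : R^2 - ‖y‖^2 ≤ ε := by nlinarith
      have hsq := Real.sq_sqrt hAM.le
      have hε2 : ε ≤ Real.sqrt (A/(M+1)) := min_le_right _ _
      have hs3 : (R^2 - ‖y‖^2)^2 ≤ A/(M+1) := by nlinarith [Real.sqrt_nonneg (A/(M+1))]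
      have hinv : (A/(M+1))⁻¹ ≤ ((R^2-‖y‖^2)^2)⁻¹ := by
        apply inv_anti₀ (by positivity) hs3
      have : A * (A/(M+1))⁻¹ ≤ A * ((R^2-‖y‖^2)^2)⁻¹ :=
        mul_le_mul_of_nonneg_left hinv hApos.le
      have hAA : A * (A/(M+1))⁻¹ = M+1 := by
        field_simp
      rw [hwdef]
      calc M + 1 = A * (A/(M+1))⁻¹ := hAA.symm
        _ ≤ A * ((R^2-‖y‖^2)^2)⁻¹ := this
    -- maximum of p - w on the closed ball of radius r'
    have hwcont : ContinuousOn (fun y : E => p y - w y) (Metric.closedBall 0 r') := by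
      apply (hp.continuous.continuousOn).sub
      rw [hwdef]
      apply continuousOn_const.mul
      apply ContinuousOn.inv₀
      · fun_prop
      · intro y hy
        have hy' : ‖y‖ ≤ r' := mem_closedBall_zero_iff.1 hy
        have : 0 < R^2 - ‖y‖^2 := by nlinarith [norm_nonneg y]
        positivity
    obtain ⟨x1, hx1mem, hx1max⟩ := (isCompact_closedBall (0:E) r').exists_isMaxOn
      ⟨0, by simp [hr'pos.le]⟩ hwcont
    have hx1norm : ‖x1‖ ≤ r' := mem_closedBall_zero_iff.1 hx1mem
    have hu01 : p 0 - w 0 ≤ p x1 - w x1 :=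
      hx1max (by simp [Metric.mem_closedBall, hr'pos.le])
    set δ := R - r' with hδdef
    have hδpos : 0 < δ := by rw [hδdef]; linarith
    have hloc : IsLocalMax (fun y => p y - A * ((R^2 - ‖y‖^2)^2)⁻¹) x1 := by
      apply Metric.eventually_nhds_iff.2 ⟨δ, hδpos, ?_⟩
      intro y hy
      have hynorm : ‖y‖ < R := by
        have h1 : ‖y‖ ≤ ‖x1‖ + ‖y - x1‖ := by
          have h1' := norm_add_le x1 (y - x1)
          have h1'' : x1 + (y - x1) = y := by abel
          rwa [h1''] at h1'
        have h2 : ‖y - x1‖ < δ := by rwa [dist_eq_norm] at hy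
        rw [hδdef] at h2
        linarith
      by_cases hcase : ‖y‖ ≤ r'
      · exact hx1max (mem_closedBall_zero_iff.2 hcase)
      · push_neg at hcase
        have h1 := hannulus y hcase.le hynorm
        have h2 : p y ≤ M := hxMmax (mem_closedBall_zero_iff.2 hynorm.le)
        have h3 : w y = A * ((R^2 - ‖y‖^2)^2)⁻¹ := rfl
        show p y - A * ((R^2 - ‖y‖^2)^2)⁻¹ ≤ p x1 - A * ((R^2 - ‖x1‖^2)^2)⁻¹
        have h4 : w x1 = A * ((R^2 - ‖x1‖^2)^2)⁻¹ := rfl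
        rw [← h3, ← h4]
        linarith
    -- directionwise second derivative comparison, summed over the basis
    have hkey : ∀ i : Fin (finrank ℝ E),
        hess p x1 (stdOrthonormalBasis ℝ E i) (stdOrthonormalBasis ℝ E i)
          ≤ 4*A*((R^2-‖x1‖^2)^3)⁻¹
            + 6*A*(2*(inner ℝ x1 (stdOrthonormalBasis ℝ E i) : ℝ))^2*((R^2-‖x1‖^2)^4)⁻¹ :=
      fun i => barrier_sdt hp hr'pos hr'R hx1norm _
        ((stdOrthonormalBasis ℝ E).orthonormal.1 i) hloc
    have hsum := Finset.sum_le_sum (fun i (_ : i ∈ Finset.univ) => hkey i)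
    have hlhs : ∑ i : Fin (finrank ℝ E),
        hess p x1 (stdOrthonormalBasis ℝ E i) (stdOrthonormalBasis ℝ E i)
        = laplacian p x1 := rfl
    have hpos1 : 0 < R^2 - ‖x1‖^2 := by nlinarith [norm_nonneg x1]
    have hinv4 : (0:ℝ) < ((R^2-‖x1‖^2)^4)⁻¹ := by positivity
    have hrhs : ∑ i : Fin (finrank ℝ E),
        (4*A*((R^2-‖x1‖^2)^3)⁻¹
          + 6*A*(2*(inner ℝ x1 (stdOrthonormalBasis ℝ E i) : ℝ))^2*((R^2-‖x1‖^2)^4)⁻¹)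
        = (n:ℝ)*(4*A*((R^2-‖x1‖^2)^3)⁻¹) + 24*A*((R^2-‖x1‖^2)^4)⁻¹*‖x1‖^2 := by
      rw [Finset.sum_add_distrib, Finset.sum_const, Finset.card_univ, Fintype.card_fin]
      congr 1
      · rw [nsmul_eq_mul, hn]
      · have e1 : ∀ i : Fin (finrank ℝ E),
            6*A*(2*(inner ℝ x1 (stdOrthonormalBasis ℝ E i) : ℝ))^2*((R^2-‖x1‖^2)^4)⁻¹
            = 24*A*((R^2-‖x1‖^2)^4)⁻¹*((inner ℝ x1 (stdOrthonormalBasis ℝ E i) : ℝ)^2) := by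
          intro i; ring
        rw [Finset.sum_congr rfl fun i _ => e1 i, ← Finset.mul_sum, parseval x1]
    rw [hlhs, hrhs] at hsum
    -- conclude p x1 ≤ w x1
    have hwx1 : w x1 = A * ((R^2 - ‖x1‖^2)^2)⁻¹ := rfl
    have hwx1pos : 0 < w x1 := by rw [hwx1]; positivity
    have hw2 : (w x1)^2 = A^2 * ((R^2-‖x1‖^2)^4)⁻¹ := by
      rw [hwx1, mul_pow, inv_pow, ← pow_mul]
    have hinv3 : ((R^2-‖x1‖^2)^3)⁻¹ = (R^2-‖x1‖^2) * ((R^2-‖x1‖^2)^4)⁻¹ := by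
      rw [eq_comm]
      field_simp
    have hnnn : (0:ℝ) ≤ (n:ℝ) := Nat.cast_nonneg n
    have hx1sq : ‖x1‖^2 ≤ R^2 := by nlinarith [norm_nonneg x1]
    have hx1sq0 : (0:ℝ) ≤ ‖x1‖^2 := sq_nonneg _
    have hub : (n:ℝ)*(4*A*((R^2-‖x1‖^2)^3)⁻¹) + 24*A*((R^2-‖x1‖^2)^4)⁻¹*‖x1‖^2
        ≤ c * (w x1)^2 := by
      rw [hinv3, hw2]
      have e5 : c * (A^2 * ((R^2-‖x1‖^2)^4)⁻¹) = (c*A) * A * ((R^2-‖x1‖^2)^4)⁻¹ := by ring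
      rw [e5, hcA]
      nlinarith [mul_pos hApos hinv4, mul_nonneg (mul_nonneg hnnn hApos.le) hinv4.le]
    have hfin : c * (p x1)^2 ≤ c * (w x1)^2 :=
      le_trans (hlapp x1) (le_trans hsum hub)
    have hsq : (p x1)^2 ≤ (w x1)^2 := le_of_mul_le_mul_left hfin hcpos
    have hple : p x1 ≤ w x1 :=
      (pow_le_pow_iff_left₀ (hppos x1).le hwx1pos.le (by norm_num)).1 hsq
    linarith [hu0, hu01, hple]
  -- conclude : p 0 ≤ 4(n+6)/(cR²) → 0 for large R, contradiction with p 0 > 0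
  have hp0 := hppos 0
  set B : ℝ := 4*((n:ℝ)+6)/(c * p 0) with hBdef
  have hBpos : 0 ≤ B := by rw [hBdef]; positivity
  set R : ℝ := Real.sqrt B + 1 with hRdef
  have hRpos : 0 < R := by
    rw [hRdef]; have := Real.sqrt_nonneg B; linarith
  have hR2 : B < R^2 := by
    rw [hRdef]
    nlinarith [Real.sq_sqrt hBpos, Real.sqrt_nonneg B]
  have hmain := main R hRpos
  have hlt : 4*((n:ℝ)+6)/(c*R^2) < p 0 := by
    rw [div_lt_iff₀ (by positivity)]
    have hBc : B * (c * p 0) = 4*((n:ℝ)+6) := by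
      rw [hBdef]; field_simp
    nlinarith [mul_pos hcpos hp0]
  linarith
end
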